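/- arXiv:2602.07517 — 5 statements merged into one kernel-verified Lean document; each statement's English description precedes it below -/
import Mathlib

section
/- Let f and g be probability measures on (𝒪, 𝓕) with f ≪ g, L := df/dg, and KL(f ‖ g) < ∞. Let 𝓟 = {C_1, …, C_m} be a finite measurable partition of 𝒪 with index map T. Then KL(f ‖ g) − KL(T_# f ‖ T_# g) = Σ_{C ∈ 𝓟} ∫_C L · ( log L − log E_g[L | C] ) dg, where E_g[L | C] := (1/g(C)) ∫_C L dg for g(C) > 0 (atoms with g(C) = 0 contribute 0). -/
open MeasureTheory Classical

/-- The Kullback–Leibler divergence `KL(P‖Q) = ∫ log (dP/dQ) dP` when `P ≪ Q` and the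
log-likelihood ratio is integrable, and `+∞` otherwise, as an extended real number. -/
noncomputable def klDiv {α : Type*} [MeasurableSpace α] (P Q : Measure α) : EReal :=
  if P ≪ Q ∧ Integrable (llr P Q) P then ((∫ x, llr P Q x ∂P : ℝ) : EReal) else ⊤

/-- **Divergence gap over a finite partition.**  Let `f ≪ g` be probability
measures on `𝒪` with `L := df/dg` and `KL(f‖g) < ∞`, and let `𝓟 = {C 1, …, C m}` be a
finite measurable partition of `𝒪` with measurable index map `T : 𝒪 → Fin m`
(so `C i = T⁻¹ {i}`).  Then
`KL(f‖g) − KL(T_# f ‖ T_# g) = ∑_{C ∈ 𝓟} ∫_C L (log L − log E_g[L | C]) dg`,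
where `E_g[L | C] := (1 / g C) ∫_C L dg` for `g C > 0` (atoms of `g`-measure `0`
contribute `0`; note `(0 : ℝ)⁻¹ = 0` and integrals over `g`-null sets vanish). -/
theorem stmt_4 {𝒪 : Type*} [MeasurableSpace 𝒪]
    (f g : Measure 𝒪) [IsProbabilityMeasure f] [IsProbabilityMeasure g]
    (hfg : f ≪ g)
    (L : 𝒪 → ℝ) (hL : L = fun x => (f.rnDeriv g x).toReal)
    (hKL : klDiv f g < ⊤)
    {m : ℕ} (T : 𝒪 → Fin m) (hT : Measurable T) :
    klDiv f g - klDiv (f.map T) (g.map T) =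
      ((∑ i, ∫ x in T ⁻¹' {i},
          L x * (Real.log (L x) -
            Real.log ((g (T ⁻¹' {i})).toReal⁻¹ * ∫ y in T ⁻¹' {i}, L y ∂g)) ∂g : ℝ) :
        EReal) := by
  subst hL
  -- unfold the klDiv of f and g
  by_cases h : f ≪ g ∧ Integrable (llr f g) f
  swap
  · exfalso; rw [klDiv, if_neg h] at hKL; exact (lt_irrefl _ hKL)
  obtain ⟨-, hint⟩ := h
  have hTae : AEMeasurable T f := hT.aemeasurable
  haveI : IsProbabilityMeasure (f.map T) := Measure.isProbabilityMeasure_map hT.aemeasurable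
  haveI : IsProbabilityMeasure (g.map T) := Measure.isProbabilityMeasure_map hT.aemeasurable
  have hacT : f.map T ≪ g.map T := hfg.map hT
  have hintT : Integrable (llr (f.map T) (g.map T)) (f.map T) := Integrable.of_finite
  rw [klDiv, if_pos ⟨hfg, hint⟩, klDiv, if_pos ⟨hacT, hintT⟩, ← EReal.coe_sub, EReal.coe_eq_coe_iff]
  -- notation
  set φ := llr f g with hφ
  have hCmeas : ∀ i : Fin m, MeasurableSet (T ⁻¹' {i}) :=
    fun i => hT (measurableSet_singleton i)
  have hmapf : ∀ i : Fin m, f.map T {i} = f (T ⁻¹' {i}) :=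
    fun i => Measure.map_apply hT (measurableSet_singleton i)
  have hmapg : ∀ i : Fin m, g.map T {i} = g (T ⁻¹' {i}) :=
    fun i => Measure.map_apply hT (measurableSet_singleton i)
  -- ∫_{C i} L dg = f (C i)
  have hLint : ∀ i : Fin m, (∫ y in T ⁻¹' {i}, (f.rnDeriv g y).toReal ∂g)
      = (f (T ⁻¹' {i})).toReal := fun i => Measure.setIntegral_toReal_rnDeriv hfg _
  -- value of the rnDeriv of the pushforwards
  have hr : ∀ i : Fin m, g (T ⁻¹' {i}) ≠ 0 →
      ((f.map T).rnDeriv (g.map T) i).toReal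
        = (f (T ⁻¹' {i})).toReal / (g (T ⁻¹' {i})).toReal := by
    intro i hgi
    have h1 : ∫⁻ x in {i}, (f.map T).rnDeriv (g.map T) x ∂(g.map T) = f.map T {i} :=
      Measure.setLIntegral_rnDeriv hacT _
    rw [lintegral_singleton] at h1
    have hgne : g.map T {i} ≠ 0 := by rw [hmapg]; exact hgi
    have hgtop : g.map T {i} ≠ ⊤ := measure_ne_top _ _
    have : (f.map T).rnDeriv (g.map T) i = f.map T {i} / g.map T {i} := by
      rw [ENNReal.eq_div_iff hgne hgtop]; rw [mul_comm]; exact h1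
    rw [this, ENNReal.toReal_div, hmapf, hmapg]
  -- integrability facts
  have hLg : Integrable (fun x => (f.rnDeriv g x).toReal) g :=
    Measure.integrable_toReal_rnDeriv
  have hLφg : Integrable (fun x => (f.rnDeriv g x).toReal • φ x) g :=
    (integrable_rnDeriv_smul_iff hfg).mpr hint
  -- per-atom computation
  have hatom : ∀ i : Fin m,
      (∫ x in T ⁻¹' {i}, (f.rnDeriv g x).toReal *
          (Real.log (f.rnDeriv g x).toReal -
            Real.log ((g (T ⁻¹' {i})).toReal⁻¹ *
              ∫ y in T ⁻¹' {i}, (f.rnDeriv g y).toReal ∂g)) ∂g)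
        = (∫ x in T ⁻¹' {i}, φ x ∂f)
          - ((f.map T) {i}).toReal * llr (f.map T) (g.map T) i := by
    intro i
    set c : ℝ := Real.log ((g (T ⁻¹' {i})).toReal⁻¹ *
      ∫ y in T ⁻¹' {i}, (f.rnDeriv g y).toReal ∂g) with hc
    have hlogL : ∀ x, Real.log (f.rnDeriv g x).toReal = φ x := fun _ => rfl
    have hsplit : (∫ x in T ⁻¹' {i}, (f.rnDeriv g x).toReal * (φ x - c) ∂g)
        = (∫ x in T ⁻¹' {i}, (f.rnDeriv g x).toReal * φ x ∂g)
          - (∫ x in T ⁻¹' {i}, (f.rnDeriv g x).toReal ∂g) * c := by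
      have hLφg' : Integrable (fun x => (f.rnDeriv g x).toReal * φ x) g := by
        simpa [smul_eq_mul] using hLφg
      rw [← integral_mul_const, ← integral_sub (hLφg'.integrableOn)
        ((hLg.mul_const c).integrableOn)]
      apply integral_congr_ae
      filter_upwards with x
      ring
    have hchg : (∫ x in T ⁻¹' {i}, (f.rnDeriv g x).toReal * φ x ∂g)
        = ∫ x in T ⁻¹' {i}, φ x ∂f := by
      have := setIntegral_rnDeriv_smul hfg (hCmeas i) (f := φ)
      simpa [smul_eq_mul] using this
    have hconst : (∫ x in T ⁻¹' {i}, (f.rnDeriv g x).toReal ∂g) * c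
        = ((f.map T) {i}).toReal * llr (f.map T) (g.map T) i := by
      rw [hLint i, hmapf]
      by_cases hgi : g (T ⁻¹' {i}) = 0
      · have hfi : f (T ⁻¹' {i}) = 0 := hfg hgi
        simp [hfi]
      · by_cases hfi : f (T ⁻¹' {i}) = 0
        · simp [hfi]
        · congr 1
          show c = Real.log ((f.map T).rnDeriv (g.map T) i).toReal
          rw [hc, hLint i, hr i hgi, div_eq_inv_mul]
    simp only [hlogL]
    rw [hsplit, hchg, hconst]
  -- sum the atoms
  have hunion : (⋃ i : Fin m, T ⁻¹' {i}) = Set.univ := by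
    ext x; simp
  have hdisj : Pairwise (Function.onFun Disjoint fun i : Fin m => T ⁻¹' {i}) := by
    intro i j hij
    simp only [Function.onFun, Set.disjoint_left]
    intro x hxi hxj
    exact hij (by simp_all)
  have hsumφ : (∑ i : Fin m, ∫ x in T ⁻¹' {i}, φ x ∂f) = ∫ x, φ x ∂f := by
    rw [← integral_iUnion_fintype hCmeas hdisj (fun i => hint.integrableOn), hunion,
      Measure.restrict_univ]
  have hB : (∫ x, llr (f.map T) (g.map T) x ∂(f.map T))
      = ∑ i : Fin m, ((f.map T) {i}).toReal * llr (f.map T) (g.map T) i := by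
    rw [integral_fintype hintT]; simp [smul_eq_mul, measureReal_def]
  calc (∫ x, φ x ∂f) - ∫ x, llr (f.map T) (g.map T) x ∂(f.map T)
      = (∑ i : Fin m, ∫ x in T ⁻¹' {i}, φ x ∂f)
        - ∑ i : Fin m, ((f.map T) {i}).toReal * llr (f.map T) (g.map T) i := by
        rw [hsumφ, hB]
    _ = ∑ i : Fin m, ((∫ x in T ⁻¹' {i}, φ x ∂f)
          - ((f.map T) {i}).toReal * llr (f.map T) (g.map T) i) := by
        rw [Finset.sum_sub_distrib]
    _ = _ := by
        refine (Finset.sum_congr rfl fun i _ => ?_).symm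
        exact hatom i
end

section
/- Let f and g be probability measures on (𝒪, 𝓕) with f ≪ g and L := df/dg. Fix M ≥ 1 and set A_− := { x : L(x) < e^{−M} }. Then ∫_{A_−} L · ( log L − log E_g[L | A_−] ) dg ≤ 2 M e^{−M}, where E_g[L | A_−] := (1/g(A_−)) ∫_{A_−} L dg when g(A_−) > 0 (and the left-hand side is 0 when g(A_−) = 0). In particular, ∫_{A_−} L |log L| dg ≤ M e^{−M} and M ∫_{A_−} L dg ≤ M e^{−M}. -/
open MeasureTheory

lemma stmt6_aux2 (M u : ℝ) (hM : 1 ≤ M) (hu : M ≤ u) :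
    u * Real.exp (-u) ≤ M * Real.exp (-M) := by
  have h1 : u - M + 1 ≤ Real.exp (u - M) := Real.add_one_le_exp _
  have key : u ≤ M * Real.exp (u - M) := by
    nlinarith [mul_nonneg (sub_nonneg.mpr hM) (sub_nonneg.mpr hu)]
  have h2 : (0:ℝ) ≤ Real.exp (-u) := (Real.exp_pos _).le
  calc u * Real.exp (-u) ≤ (M * Real.exp (u - M)) * Real.exp (-u) :=
        mul_le_mul_of_nonneg_right key h2
    _ = M * Real.exp (-M) := by
        rw [mul_assoc, ← Real.exp_add]; congr 1; ring

lemma stmt6_aux (M t : ℝ) (hM : 1 ≤ M) (ht0 : 0 ≤ t) (ht : t ≤ Real.exp (-M)) :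
    t * |Real.log t| ≤ M * Real.exp (-M) := by
  rcases ht0.eq_or_lt with h | htpos
  · rw [← h]; simp; positivity
  · have hlog : Real.log t ≤ -M := (Real.log_le_iff_le_exp htpos).mpr ht
    have hlog0 : Real.log t ≤ 0 := by linarith
    have hu : M ≤ -Real.log t := by linarith
    have ht' : t = Real.exp (-(-Real.log t)) := by rw [neg_neg, Real.exp_log htpos]
    calc t * |Real.log t| = (-Real.log t) * Real.exp (-(-Real.log t)) := by
          rw [abs_of_nonpos hlog0, ← ht']; ring
      _ ≤ M * Real.exp (-M) := stmt6_aux2 M _ hM hu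

/-- **Lower-tail bound.**  Let `f ≪ g` be probability measures with
`L := df/dg`.  Fix `M ≥ 1` and set `A₋ := {x | L x < e^{−M}}`.  Then
`∫_{A₋} L (log L − log E_g[L | A₋]) dg ≤ 2 M e^{−M}`, where
`E_g[L | A₋] := (1 / g A₋) ∫_{A₋} L dg` when `g A₋ > 0` (and the left-hand side is `0`
when `g A₋ = 0`; note `(0 : ℝ)⁻¹ = 0` and integrals over `g`-null sets vanish).
In particular `∫_{A₋} L |log L| dg ≤ M e^{−M}` and `M ∫_{A₋} L dg ≤ M e^{−M}`. -/
theorem stmt_6 {𝒪 : Type*} [MeasurableSpace 𝒪]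
    (f g : Measure 𝒪) [IsProbabilityMeasure f] [IsProbabilityMeasure g]
    (hfg : f ≪ g)
    (L : 𝒪 → ℝ) (hL : L = fun x => (f.rnDeriv g x).toReal)
    (M : ℝ) (hM : 1 ≤ M)
    (Aminus : Set 𝒪) (hAminus : Aminus = {x | L x < Real.exp (-M)}) :
    (∫ x in Aminus,
        L x * (Real.log (L x) -
          Real.log ((g Aminus).toReal⁻¹ * ∫ y in Aminus, L y ∂g)) ∂g)
        ≤ 2 * M * Real.exp (-M) ∧
      (∫ x in Aminus, L x * |Real.log (L x)| ∂g) ≤ M * Real.exp (-M) ∧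
      M * (∫ x in Aminus, L x ∂g) ≤ M * Real.exp (-M) := by
  have hMpos : (0:ℝ) < M := lt_of_lt_of_le one_pos hM
  have hEpos : (0:ℝ) < Real.exp (-M) := Real.exp_pos _
  have hLm : Measurable L := by
    rw [hL]; exact (Measure.measurable_rnDeriv f g).ennreal_toReal
  have hLnn : ∀ x, 0 ≤ L x := by
    rw [hL]; exact fun x => ENNReal.toReal_nonneg
  have hmA : MeasurableSet Aminus := by
    rw [hAminus]; exact measurableSet_lt hLm measurable_const
  have hLlt : ∀ x ∈ Aminus, L x < Real.exp (-M) := by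
    rw [hAminus]; exact fun x hx => hx
  have hgAlt : g Aminus < ⊤ := measure_lt_top g _
  have hgA1 : (g Aminus).toReal ≤ 1 := by
    have := prob_le_one (μ := g) (s := Aminus)
    simpa using ENNReal.toReal_mono (by simp) this
  set gA : ℝ := (g Aminus).toReal with hgA
  set I : ℝ := ∫ y in Aminus, L y ∂g with hI
  set c : ℝ := gA⁻¹ * I with hc
  have hInn : 0 ≤ I := setIntegral_nonneg hmA fun x _ => hLnn x
  -- I ≤ exp(-M) * gA
  have hIbound : I ≤ Real.exp (-M) * gA := by
    have := norm_setIntegral_le_of_norm_le_const (μ := g) (s := Aminus)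
      (f := L) (C := Real.exp (-M)) hgAlt
      (fun x hx => by rw [Real.norm_eq_abs, abs_of_nonneg (hLnn x)]; exact (hLlt x hx).le)
    calc I ≤ ‖I‖ := le_abs_self I
      _ ≤ Real.exp (-M) * gA := this
  have hIle : I ≤ Real.exp (-M) := by nlinarith
  -- integrability of L on the restriction
  have hiL : Integrable L (g.restrict Aminus) := by
    rw [hL]; exact (Measure.integrable_toReal_rnDeriv (μ := f) (ν := g)).restrict
  -- pointwise bound for L * |log L|
  have hptw : ∀ x ∈ Aminus, L x * |Real.log (L x)| ≤ M * Real.exp (-M) :=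
    fun x hx => stmt6_aux M (L x) hM (hLnn x) (hLlt x hx).le
  -- Part 2
  have part2 : (∫ x in Aminus, L x * |Real.log (L x)| ∂g) ≤ M * Real.exp (-M) := by
    have hb := norm_setIntegral_le_of_norm_le_const (μ := g) (s := Aminus)
      (f := fun x => L x * |Real.log (L x)|) (C := M * Real.exp (-M)) hgAlt
      (fun x hx => by
        rw [Real.norm_eq_abs, abs_of_nonneg (mul_nonneg (hLnn x) (abs_nonneg _))]
        exact hptw x hx)
    have h2 : (∫ x in Aminus, L x * |Real.log (L x)| ∂g)
        ≤ (M * Real.exp (-M)) * gA := le_trans (le_abs_self _) hb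
    nlinarith [mul_le_mul_of_nonneg_left hgA1 (by positivity : (0:ℝ) ≤ M * Real.exp (-M))]
  -- Part 3
  have part3 : M * I ≤ M * Real.exp (-M) :=
    mul_le_mul_of_nonneg_left hIle hMpos.le
  -- Part 1
  -- integrability of L * log L on the restriction
  have hbd : ∀ᵐ x ∂(g.restrict Aminus),
      ‖L x * Real.log (L x)‖ ≤ M * Real.exp (-M) := by
    rw [ae_restrict_iff' hmA]
    filter_upwards with x hx
    rw [Real.norm_eq_abs, abs_mul, abs_of_nonneg (hLnn x)]
    exact hptw x hx
  have hInt1 : Integrable (fun x => L x * Real.log (L x)) (g.restrict Aminus) :=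
    (integrable_const (M * Real.exp (-M))).mono'
      ((hLm.mul (Real.measurable_log.comp hLm)).aestronglyMeasurable) hbd
  have hsplit : (∫ x in Aminus, L x * (Real.log (L x) - Real.log c) ∂g)
      = (∫ x in Aminus, L x * Real.log (L x) ∂g) - Real.log c * I := by
    have heq : (fun x => L x * (Real.log (L x) - Real.log c))
        = fun x => L x * Real.log (L x) - Real.log c * L x := by ext x; ring
    rw [heq, integral_sub hInt1 (hiL.const_mul _), integral_const_mul]
  have h1 : (∫ x in Aminus, L x * Real.log (L x) ∂g) ≤ 0 := by
    apply integral_nonpos_of_ae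
    show ∀ᵐ x ∂(g.restrict Aminus), L x * Real.log (L x) ≤ 0
    rw [ae_restrict_iff' hmA]
    filter_upwards with x hx
    rcases (hLnn x).eq_or_lt with h | hpos
    · simp [← h]
    · have hlt1 : L x < 1 := lt_of_lt_of_le (hLlt x hx)
        (by rw [show (1:ℝ) = Real.exp 0 by simp]; exact Real.exp_le_exp.mpr (by linarith))
      have : Real.log (L x) ≤ 0 := (Real.log_neg hpos hlt1).le
      exact mul_nonpos_of_nonneg_of_nonpos (hLnn x) this
  have h2 : (- Real.log c) * I ≤ M * Real.exp (-M) := by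
    rcases hInn.eq_or_lt with h0 | hIpos
    · rw [← h0]; simp; positivity
    · have hgA0 : g Aminus ≠ 0 := by
        intro h
        have : I = 0 := by
          rw [hI, Measure.restrict_eq_zero.mpr h]; exact integral_zero_measure _
        linarith
      have hgApos : 0 < gA := ENNReal.toReal_pos hgA0 hgAlt.ne
      have hcpos : 0 < c := mul_pos (inv_pos.mpr hgApos) hIpos
      have hcle : c ≤ Real.exp (-M) := by
        rw [hc, inv_mul_le_iff₀ hgApos]
        nlinarith
      have hIc : I = c * gA := by
        rw [hc]; field_simp
      have hlc : Real.log c ≤ -M := (Real.log_le_iff_le_exp hcpos).mpr hcle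
      have hlc0 : Real.log c ≤ 0 := by linarith
      have haux : c * (-Real.log c) ≤ M * Real.exp (-M) := by
        have := stmt6_aux M c hM hcpos.le hcle
        rwa [abs_of_nonpos hlc0] at this
      nlinarith [mul_nonneg hcpos.le (neg_nonneg.mpr hlc0)]
  refine ⟨?_, part2, part3⟩
  rw [hsplit]
  nlinarith
end

section
/- With the 1-positive (K−1)-negative sampling scheme, the conditional distribution of the index J given Y = (Y_1,…,Y_K) satisfies, almost surely, ℙ(J = j | Y) = r(Y_j) / Σ_{i=1}^K r(Y_i) for each j ∈ {1,…,K} (the denominator is almost surely positive). -/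
open MeasureTheory Classical

/-- The conditional law of `Y = (Y_1, …, Y_K)` given `J = j` in the 1-positive
`(K−1)`-negative sampling scheme: the coordinates are independent with `Y_j ∼ P`
and `Y_i ∼ Q` for `i ≠ j`. -/
noncomputable def condLaw {𝒴 : Type*} [MeasurableSpace 𝒴] (P Q : Measure 𝒴) {K : ℕ}
    (j : Fin K) : Measure (Fin K → 𝒴) :=
  Measure.pi (fun i => if i = j then P else Q)

/-- The marginal law `ℙ_Y` of `Y = (Y_1, …, Y_K)` in the 1-positive `(K−1)`-negative
sampling scheme (the index `J` is uniform on `{1, …, K}`). -/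
noncomputable def margLaw {𝒴 : Type*} [MeasurableSpace 𝒴] (P Q : Measure 𝒴) (K : ℕ) :
    Measure (Fin K → 𝒴) :=
  (K : ENNReal)⁻¹ • ∑ j : Fin K, condLaw P Q j

/-- The joint law of `(J, Y)` in the 1-positive `(K−1)`-negative sampling scheme:
`J` is uniform on `{1, …, K}` and, given `J = j`, `Y ∼ condLaw P Q j`. -/
noncomputable def jointLaw {𝒴 : Type*} [MeasurableSpace 𝒴] (P Q : Measure 𝒴) (K : ℕ) :
    Measure (Fin K × (Fin K → 𝒴)) :=
  (K : ENNReal)⁻¹ • ∑ j : Fin K, (condLaw P Q j).map (fun y => (j, y))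

/-- Lebesgue integral of a product of single-coordinate functions over a finite
product measure. -/
theorem lintegral_pi_prod {n : ℕ} {α : Type*} [MeasurableSpace α]
    (μ : Measure α) [SigmaFinite μ] (f : Fin n → α → ENNReal)
    (hf : ∀ i, Measurable (f i)) :
    ∫⁻ x : Fin n → α, ∏ i, f i (x i) ∂Measure.pi (fun _ => μ)
      = ∏ i, ∫⁻ a, f i a ∂μ := by
  induction n with
  | zero => simp [Measure.pi_of_empty]
  | succ n ih =>
    have h := (measurePreserving_piFinSuccAbove (fun _ : Fin (n + 1) => μ) 0).symm
    have hmeas : Measurable fun x : Fin (n + 1) → α => ∏ i, f i (x i) :=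
      Finset.measurable_prod _ fun i _ => (hf i).comp (measurable_pi_apply i)
    have hg : Measurable fun x : Fin n → α => ∏ i, f i.succ (x i) :=
      Finset.measurable_prod _ fun i _ => (hf i.succ).comp (measurable_pi_apply i)
    rw [← h.lintegral_comp hmeas]
    simp only [MeasurableEquiv.piFinSuccAbove_symm_apply, Fin.insertNthEquiv,
      Fin.prod_univ_succ, Fin.insertNth_zero, Equiv.coe_fn_mk, Fin.zero_succAbove, cast_eq,
      Fin.cons_zero, Fin.cons_succ]
    rw [show (∫⁻ a : α × (Fin n → α), f 0 a.1 * ∏ i, f i.succ (a.2 i)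
          ∂μ.prod (Measure.pi fun _ => μ))
        = (∫⁻ a, f 0 a ∂μ) * ∫⁻ x : Fin n → α, ∏ i, f i.succ (x i)
            ∂Measure.pi (fun _ => μ) from
      lintegral_prod_mul (hf 0).aemeasurable hg.aemeasurable]
    rw [ih _ (fun i => hf i.succ)]

/-- In the 1-positive `(K−1)`-negative sampling scheme, the conditional
distribution of the index `J` given `Y` satisfies, almost surely,
`ℙ(J = j | Y) = r (Y_j) / ∑ i, r (Y_i)` for each `j` (and the denominator is almost
surely positive).  This is expressed by the defining property of conditional
distributions: for every `j` and every measurable `S`,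
`ℙ(J = j, Y ∈ S) = ∫_S r (y j) / ∑ i, r (y i) dℙ_Y(y)`. -/
theorem stmt_11 {𝒴 : Type*} [MeasurableSpace 𝒴]
    (P Q : Measure 𝒴) [IsProbabilityMeasure P] [IsProbabilityMeasure Q]
    (hPQ : P ≪ Q) (r : 𝒴 → ENNReal) (hr : r = P.rnDeriv Q)
    (K : ℕ) (hK : 2 ≤ K) :
    (∀ j : Fin K, ∀ S : Set (Fin K → 𝒴), MeasurableSet S →
        jointLaw P Q K ({j} ×ˢ S)
          = ∫⁻ y in S, r (y j) / ∑ i, r (y i) ∂(margLaw P Q K)) ∧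
      (∀ᵐ y ∂(margLaw P Q K), 0 < ∑ i, r (y i)) := by
  have hrm : Measurable r := hr ▸ Measure.measurable_rnDeriv P Q
  set μ : Measure (Fin K → 𝒴) := Measure.pi (fun _ => Q) with hμ
  have hri : ∀ i : Fin K, Measurable fun y : Fin K → 𝒴 => r (y i) :=
    fun i => hrm.comp (measurable_pi_apply i)
  have hsum_meas : Measurable fun y : Fin K → 𝒴 => ∑ i, r (y i) :=
    Finset.measurable_sum _ (fun i _ => hri i)
  -- key: condLaw is a density w.r.t. μ
  have hcond : ∀ j : Fin K, condLaw P Q j = μ.withDensity (fun y => r (y j)) := by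
    intro j
    haveI : ∀ i : Fin K, SigmaFinite ((fun i => if i = j then P else Q) i) := by
      intro i
      by_cases h : i = j <;> simp only [h, if_true, if_false, if_neg] <;> infer_instance
    refine Measure.pi_eq fun s hs => ?_
    rw [withDensity_apply _ (MeasurableSet.univ_pi hs),
      ← lintegral_indicator (MeasurableSet.univ_pi hs)]
    have hrw : (Set.indicator (Set.pi Set.univ s) fun y => r (y j))
        = fun y : Fin K → 𝒴 => ∏ i,
            (Set.indicator (s i) (fun t => if i = j then r t else 1)) (y i) := by
      funext y
      by_cases hy : y ∈ Set.pi Set.univ s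
      · rw [Set.indicator_of_mem hy]
        have : ∀ i : Fin K, (Set.indicator (s i) (fun t => if i = j then r t else 1)) (y i)
            = if i = j then r (y i) else 1 := fun i =>
          Set.indicator_of_mem (hy i (Set.mem_univ i)) _
        simp_rw [this]
        simp
      · rw [Set.indicator_of_notMem hy]
        obtain ⟨i, hi⟩ : ∃ i, y i ∉ s i := by simpa [Set.mem_pi] using hy
        exact (Finset.prod_eq_zero (Finset.mem_univ i)
          (by rw [Set.indicator_of_notMem hi])).symm
    rw [hrw, lintegral_pi_prod Q _ (fun i => ((Measurable.ite (by
        by_cases h : i = j <;> simp [h]) hrm measurable_const).indicator (hs i)))]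
    refine Finset.prod_congr rfl fun i _ => ?_
    by_cases h : i = j
    · subst h
      simp only [if_pos rfl, if_true]
      rw [lintegral_indicator (hs i), hr, Measure.setLIntegral_rnDeriv hPQ]
    · simp only [if_neg h]
      rw [lintegral_indicator (hs i)]
      simp
  -- marginal law as a density
  have hmarg : margLaw P Q K
      = μ.withDensity (fun y => (K : ENNReal)⁻¹ * ∑ i, r (y i)) := by
    ext S hS
    rw [margLaw, Measure.smul_apply, Measure.coe_finset_sum, Finset.sum_apply,
      withDensity_apply _ hS]
    simp_rw [hcond, withDensity_apply _ hS]
    rw [← lintegral_finset_sum _ (fun i _ => hri i), smul_eq_mul,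
      ← lintegral_const_mul _ hsum_meas]
  -- a.e. finiteness of each r (y i)
  have hfin : ∀ᵐ y ∂μ, ∀ i : Fin K, r (y i) < ⊤ := by
    rw [ae_all_iff]
    intro i
    have h0 : ∀ᵐ x ∂Q, r x < ⊤ := hr ▸ Measure.rnDeriv_lt_top P Q
    have : μ {y | ¬ r (y i) < ⊤} = 0 := by
      have hpre : {y : Fin K → 𝒴 | ¬ r (y i) < ⊤} = Function.eval i ⁻¹' {x | ¬ r x < ⊤} := rfl
      rw [hμ, hpre]
      exact Measure.pi_eval_preimage_null _ (by simpa [ae_iff] using h0)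
    simpa [ae_iff] using this
  constructor
  · intro j S hS
    -- LHS
    have hL : jointLaw P Q K ({j} ×ˢ S) = (K : ENNReal)⁻¹ * condLaw P Q j S := by
      rw [jointLaw, Measure.smul_apply, Measure.coe_finset_sum, Finset.sum_apply]
      have hterm : ∀ i : Fin K, (condLaw P Q i).map (fun y => (i, y)) ({j} ×ˢ S)
          = if i = j then condLaw P Q i S else 0 := by
        intro i
        rw [Measure.map_apply measurable_prodMk_left
          ((measurableSet_singleton j).prod hS)]
        by_cases h : i = j
        · subst h
          simp only [if_pos rfl]
          congr 1
          ext y; simp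
        · simp only [if_neg h]
          have hemp : (Prod.mk i) ⁻¹' ({j} ×ˢ S) = (∅ : Set (Fin K → 𝒴)) := by
            ext y
            simp only [Set.mem_preimage, Set.mem_prod, Set.mem_singleton_iff,
              Set.mem_empty_iff_false, iff_false]
            rintro ⟨h1, -⟩
            exact h h1
          rw [hemp, measure_empty]
      simp_rw [hterm]
      rw [Finset.sum_ite_eq' Finset.univ j _]
      simp
    have hgm : Measurable fun y : Fin K → 𝒴 => r (y j) / ∑ i, r (y i) :=
      (hri j).div hsum_meas
    have hfm : Measurable fun y : Fin K → 𝒴 => (K : ENNReal)⁻¹ * ∑ i, r (y i) :=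
      measurable_const.mul hsum_meas
    rw [hL, hcond j, withDensity_apply _ hS, hmarg,
      setLIntegral_withDensity_eq_setLIntegral_mul μ hfm hgm hS,
      ← lintegral_const_mul _ (hri j)]
    refine setLIntegral_congr_fun_ae hS ?_
    filter_upwards [hfin] with y hy _
    have hle : r (y j) ≤ ∑ i, r (y i) :=
      Finset.single_le_sum (f := fun i => r (y i)) (fun i _ => zero_le) (Finset.mem_univ j)
    have hT : (∑ i, r (y i)) ≠ ⊤ := by
      rw [← lt_top_iff_ne_top]
      exact ENNReal.sum_lt_top.mpr fun i _ => hy i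
    by_cases h0 : (∑ i, r (y i)) = 0
    · have hrj : r (y j) = 0 := le_antisymm (h0 ▸ hle) (zero_le)
      simp [Pi.mul_apply, h0, hrj]
    · simp only [Pi.mul_apply]
      rw [mul_assoc]
      congr 1
      rw [mul_comm, ENNReal.div_mul_cancel h0 hT]
  · rw [hmarg, ae_iff]
    have hset : {y : Fin K → 𝒴 | ¬ 0 < ∑ i, r (y i)} = (fun y => ∑ i, r (y i)) ⁻¹' {0} := by
      ext y; simp [pos_iff_ne_zero]
    have hms : MeasurableSet {y : Fin K → 𝒴 | ¬ 0 < ∑ i, r (y i)} := by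
      rw [hset]; exact hsum_meas (measurableSet_singleton 0)
    rw [withDensity_apply _ hms]
    have hz : ∀ᵐ y ∂(μ.restrict {y : Fin K → 𝒴 | ¬ 0 < ∑ i, r (y i)}),
        (K : ENNReal)⁻¹ * ∑ i, r (y i) = 0 := by
      refine (ae_restrict_iff' hms).2 (Filter.Eventually.of_forall fun y hy => ?_)
      have : (∑ i, r (y i)) = 0 := by simpa [pos_iff_ne_zero] using hy
      rw [this, mul_zero]
    rw [lintegral_congr_ae hz, lintegral_zero]
end

section
/- (InfoNCE upper bound by information drift.) With the 1-positive (K−1)-negative sampling scheme, for every measurable score function h : 𝒴 → ℝ define the K-sample InfoNCE loss 𝓛_{NCE,K}(h) := −E[ log( e^{h(Y_J)} / Σ_{i=1}^K e^{h(Y_i)} ) ]. Then for every K ≥ 2, −𝓛_{NCE,K}(h) ≤ KL(P‖Q) − log K. -/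
open MeasureTheory Classical

/-- The expectation of a real random variable as an extended real number:
the difference of the lower integrals of the positive and negative parts. -/
noncomputable def expEReal {α : Type*} [MeasurableSpace α] (ν : Measure α) (f : α → ℝ) :
    EReal :=
  ((∫⁻ x, ENNReal.ofReal (f x) ∂ν : ENNReal) : EReal)
    - ((∫⁻ x, ENNReal.ofReal (-f x) ∂ν : ENNReal) : EReal)

/-! ### Auxiliary lemmas -/

section Aux

variable {α β : Type*} [MeasurableSpace α] [MeasurableSpace β]

/-- `P ⊗ M` has density `dP/dQ ∘ fst` with respect to `Q ⊗ M`. -/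
lemma aux_prod_withDensity_fst (P Q : Measure α) [IsProbabilityMeasure P]
    [IsProbabilityMeasure Q] (hPQ : P ≪ Q) (M : Measure β) [IsProbabilityMeasure M] :
    P.prod M = (Q.prod M).withDensity (fun w => P.rnDeriv Q w.1) := by
  have hD : Measurable (fun w : α × β => P.rnDeriv Q w.1) :=
    (Measure.measurable_rnDeriv P Q).comp measurable_fst
  refine Measure.prod_eq fun s t hs ht => ?_
  rw [withDensity_apply _ (hs.prod ht), ← Measure.prod_restrict s t]
  rw [MeasureTheory.lintegral_prod _ hD.aemeasurable]
  simp only [lintegral_const, Measure.restrict_apply_univ]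
  calc ∫⁻ x, P.rnDeriv Q x * M t ∂Q.restrict s
      = (∫⁻ x in s, P.rnDeriv Q x ∂Q) * M t := lintegral_mul_const _ (Measure.measurable_rnDeriv _ _)
    _ = P s * M t := by rw [Measure.setLIntegral_rnDeriv hPQ]

/-- The core "Gibbs/change-of-measure" inequality on a product space. -/
lemma aux_core (P Q : Measure α) [IsProbabilityMeasure P] [IsProbabilityMeasure Q]
    (hPQ : P ≪ Q) (hint : Integrable (llr P Q) P)
    (M : Measure β) [IsProbabilityMeasure M]
    (c : α × β → ℝ) (hc : Measurable c) (hpos : ∀ w, 0 < c w)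
    {Kr : ℝ} (hle : ∀ w, c w ≤ Kr)
    (hone : ∫⁻ w, ENNReal.ofReal (c w) ∂(Q.prod M) ≤ 1) :
    ENNReal.ofReal (Real.log Kr - ∫ x, llr P Q x ∂P)
      ≤ ∫⁻ w, ENNReal.ofReal (Real.log Kr - Real.log (c w)) ∂(P.prod M) := by
  set μ := P.prod M with hμ
  set ν := Q.prod M with hν
  set g : α × β → ℝ := fun w => Real.log Kr - Real.log (c w) with hg
  by_cases htop : ∫⁻ w, ENNReal.ofReal (g w) ∂μ = ⊤
  · rw [htop]; exact le_top
  have hg_meas : Measurable g := measurable_const.sub (Real.measurable_log.comp hc)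
  have hg_nn : ∀ w, 0 ≤ g w := fun w =>
    sub_nonneg.2 (Real.log_le_log (hpos w) (hle w))
  have hg_int : Integrable g μ :=
    ⟨hg_meas.aestronglyMeasurable,
      (hasFiniteIntegral_iff_ofReal (ae_of_all _ hg_nn)).2 (lt_top_iff_ne_top.2 htop)⟩
  rw [← ofReal_integral_eq_lintegral_ofReal hg_int (ae_of_all _ hg_nn)]
  apply ENNReal.ofReal_le_ofReal
  -- reduce to a real inequality
  have hLmeas : Measurable (fun w : α × β => llr P Q w.1) :=
    (measurable_llr P Q).comp measurable_fst
  have hmapfst : μ.map Prod.fst = P := by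
    simp [hμ]
  have hL_int : Integrable (fun w : α × β => llr P Q w.1) μ := by
    have h1 : Integrable (llr P Q) (μ.map Prod.fst) := by rw [hmapfst]; exact hint
    exact (integrable_map_measure (stronglyMeasurable_llr P Q).aestronglyMeasurable
      measurable_fst.aemeasurable).1 h1
  have hL_eq : ∫ w, llr P Q w.1 ∂μ = ∫ x, llr P Q x ∂P := by
    have h2 : ∫ y, llr P Q y ∂(μ.map Prod.fst) = ∫ w, llr P Q w.1 ∂μ :=
      integral_map measurable_fst.aemeasurable
        (stronglyMeasurable_llr P Q).aestronglyMeasurable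
    rw [hmapfst] at h2
    exact h2.symm
  -- the tilted function T
  set T : α × β → ℝ := fun w => c w * Real.exp (- llr P Q w.1) with hT
  have hTpos : ∀ w, 0 < T w := fun w => mul_pos (hpos w) (Real.exp_pos _)
  have hTmeas : Measurable T := hc.mul (Real.measurable_exp.comp hLmeas.neg)
  have hT_lint : ∫⁻ w, ENNReal.ofReal (T w) ∂μ ≤ 1 := by
    have hD : Measurable (fun w : α × β => P.rnDeriv Q w.1) :=
      (Measure.measurable_rnDeriv P Q).comp measurable_fst
    rw [hμ, aux_prod_withDensity_fst P Q hPQ M,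
      lintegral_withDensity_eq_lintegral_mul _ hD hTmeas.ennreal_ofReal]
    refine le_trans (le_trans (lintegral_mono_ae ?_) (le_refl _)) hone
    have hlt : ∀ᵐ w ∂(Q.prod M), P.rnDeriv Q w.1 < ⊤ := by
      have h1 : (Q.prod M).map Prod.fst = Q := by simp
      have h2 : ∀ᵐ x ∂((Q.prod M).map Prod.fst), P.rnDeriv Q x < ⊤ := by
        rw [h1]; exact Measure.rnDeriv_lt_top P Q
      exact ae_of_ae_map measurable_fst.aemeasurable h2
    filter_upwards [hlt] with w hw
    simp only [Pi.mul_apply]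
    rcases eq_or_ne (P.rnDeriv Q w.1) 0 with h0 | h0
    · simp [h0]
    · have hDpos : 0 < (P.rnDeriv Q w.1).toReal := ENNReal.toReal_pos h0 hw.ne
      have hexp : Real.exp (- llr P Q w.1) = ((P.rnDeriv Q w.1).toReal)⁻¹ := by
        rw [llr_def, Real.exp_neg, Real.exp_log hDpos]
      refine le_of_eq ?_
      calc P.rnDeriv Q w.1 * ENNReal.ofReal (T w)
          = ENNReal.ofReal ((P.rnDeriv Q w.1).toReal) *
              (ENNReal.ofReal (c w) * ENNReal.ofReal (((P.rnDeriv Q w.1).toReal)⁻¹)) := by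
            rw [ENNReal.ofReal_toReal hw.ne]
            congr 1
            rw [hT]; simp only
            rw [hexp, ENNReal.ofReal_mul (hpos w).le]
        _ = ENNReal.ofReal (c w) *
              (ENNReal.ofReal ((P.rnDeriv Q w.1).toReal) *
                ENNReal.ofReal (((P.rnDeriv Q w.1).toReal)⁻¹)) := by ring
        _ = ENNReal.ofReal (c w) := by
            rw [← ENNReal.ofReal_mul ENNReal.toReal_nonneg, mul_inv_cancel₀ hDpos.ne',
              ENNReal.ofReal_one, mul_one]
  have hT_int : Integrable T μ :=
    ⟨hTmeas.aestronglyMeasurable,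
      (hasFiniteIntegral_iff_ofReal (ae_of_all _ fun w => (hTpos w).le)).2
        (lt_of_le_of_lt hT_lint ENNReal.one_lt_top)⟩
  have hT_integral : ∫ w, T w ∂μ ≤ 1 := by
    rw [integral_eq_lintegral_of_nonneg_ae (ae_of_all _ fun w => (hTpos w).le)
      hTmeas.aestronglyMeasurable]
    calc (∫⁻ w, ENNReal.ofReal (T w) ∂μ).toReal ≤ (1 : ENNReal).toReal :=
        ENNReal.toReal_mono (by norm_num) hT_lint
      _ = 1 := by simp
  have hlogc_int : Integrable (fun w => Real.log (c w)) μ := by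
    have : (fun w => Real.log (c w)) = fun w => Real.log Kr - g w := by
      funext w; simp [hg]
    rw [this]
    exact (integrable_const _).sub hg_int
  have hpt : ∀ w, Real.log (c w) - llr P Q w.1 ≤ T w - 1 := by
    intro w
    have h1 : Real.log (T w) = Real.log (c w) - llr P Q w.1 := by
      rw [hT]; simp only
      rw [Real.log_mul (hpos w).ne' (Real.exp_pos _).ne', Real.log_exp]
      ring
    calc Real.log (c w) - llr P Q w.1 = Real.log (T w) := h1.symm
      _ ≤ T w - 1 := Real.log_le_sub_one_of_pos (hTpos w)
  have hcomp : ∫ w, (Real.log (c w) - llr P Q w.1) ∂μ ≤ ∫ w, (T w - 1) ∂μ :=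
    integral_mono (hlogc_int.sub hL_int) (hT_int.sub (integrable_const 1)) hpt
  rw [integral_sub hlogc_int hL_int, integral_sub hT_int (integrable_const 1),
    integral_const] at hcomp
  simp only [measure_univ, probReal_univ, ENNReal.toReal_one, smul_eq_mul, one_mul] at hcomp
  have hgint_eq : ∫ w, g w ∂μ = Real.log Kr - ∫ w, Real.log (c w) ∂μ := by
    rw [hg, integral_sub (integrable_const _) hlogc_int, integral_const]
    simp
  rw [hgint_eq, ← hL_eq]
  linarith

end Aux

section PiAux

variable {𝒴 : Type*} [MeasurableSpace 𝒴]

/-- Transfer a lintegral over `Q^{n+1}` to the product splitting at coordinate `j`. -/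
lemma aux_lint_pi_eq (Q : Measure 𝒴) [IsProbabilityMeasure Q] (n : ℕ) (j : Fin (n + 1))
    (φ : 𝒴 × (Fin n → 𝒴) → ENNReal) (hφ : Measurable φ) :
    ∫⁻ y, φ (y j, fun i => y (j.succAbove i)) ∂(Measure.pi fun _ : Fin (n + 1) => Q)
      = ∫⁻ w, φ w ∂(Q.prod (Measure.pi fun _ : Fin n => Q)) := by
  have hp := measurePreserving_piFinSuccAbove (fun _ : Fin (n + 1) => Q) j
  exact hp.lintegral_comp hφ

/-- Transfer a lintegral over `condLaw P Q j` to the product splitting at coordinate `j`. -/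
lemma aux_lint_cond_eq (P Q : Measure 𝒴) [IsProbabilityMeasure P] [IsProbabilityMeasure Q]
    (n : ℕ) (j : Fin (n + 1)) (φ : 𝒴 × (Fin n → 𝒴) → ENNReal) (hφ : Measurable φ) :
    ∫⁻ y, φ (y j, fun i => y (j.succAbove i)) ∂(condLaw P Q j)
      = ∫⁻ w, φ w ∂(P.prod (Measure.pi fun _ : Fin n => Q)) := by
  haveI : ∀ i : Fin (n + 1), SigmaFinite ((fun i => if i = j then P else Q) i) := by
    intro i; dsimp only; split <;> infer_instance
  have hp := measurePreserving_piFinSuccAbove (fun i : Fin (n + 1) => if i = j then P else Q) j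
  simp only [if_pos rfl] at hp
  have hfam : (fun i : Fin n => if j.succAbove i = j then P else Q) = fun _ => Q := by
    funext i; exact if_neg (Fin.succAbove_ne j i)
  rw [hfam] at hp
  exact hp.lintegral_comp hφ

end PiAux

section MainAux

variable {𝒴 : Type*} [MeasurableSpace 𝒴]

/-- The per-index InfoNCE lower bound. -/
lemma aux_perj (P Q : Measure 𝒴) [IsProbabilityMeasure P] [IsProbabilityMeasure Q]
    (hPQ : P ≪ Q) (hint : Integrable (llr P Q) P) (n : ℕ)
    (h : 𝒴 → ℝ) (hh : Measurable h) (j : Fin (n + 1)) :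
    ENNReal.ofReal (Real.log ((n + 1 : ℕ) : ℝ) - ∫ x, llr P Q x ∂P)
      ≤ ∫⁻ y, ENNReal.ofReal
          (-Real.log (Real.exp (h (y j)) / ∑ i, Real.exp (h (y i)))) ∂(condLaw P Q j) := by
  set Kr : ℝ := ((n + 1 : ℕ) : ℝ) with hKr
  have hKrpos : 0 < Kr := by positivity
  set Mn := Measure.pi (fun _ : Fin n => Q) with hMn
  set c : 𝒴 × (Fin n → 𝒴) → ℝ := fun w =>
    Kr * Real.exp (h w.1) / (Real.exp (h w.1) + ∑ i, Real.exp (h (w.2 i))) with hc_def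
  have hden_pos : ∀ w : 𝒴 × (Fin n → 𝒴),
      0 < Real.exp (h w.1) + ∑ i, Real.exp (h (w.2 i)) := by
    intro w
    have : (0 : ℝ) ≤ ∑ i, Real.exp (h (w.2 i)) :=
      Finset.sum_nonneg fun i _ => (Real.exp_pos _).le
    linarith [Real.exp_pos (h w.1)]
  have hc_meas : Measurable c := by
    apply Measurable.div
    · exact measurable_const.mul (Real.measurable_exp.comp (hh.comp measurable_fst))
    · apply Measurable.add
      · exact Real.measurable_exp.comp (hh.comp measurable_fst)
      · apply Finset.measurable_sum
        intro i _
        exact Real.measurable_exp.comp (hh.comp ((measurable_pi_apply i).comp measurable_snd))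
  have hc_pos : ∀ w, 0 < c w := fun w =>
    div_pos (mul_pos hKrpos (Real.exp_pos _)) (hden_pos w)
  have hc_le : ∀ w, c w ≤ Kr := by
    intro w
    rw [hc_def]; simp only
    rw [div_le_iff₀ (hden_pos w)]
    have h1 : (0 : ℝ) ≤ ∑ i, Real.exp (h (w.2 i)) :=
      Finset.sum_nonneg fun i _ => (Real.exp_pos _).le
    nlinarith [Real.exp_pos (h w.1)]
  -- sum positivity on the pi space
  have hS_pos : ∀ y : Fin (n + 1) → 𝒴, 0 < ∑ i, Real.exp (h (y i)) := fun y =>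
    Finset.sum_pos (fun i _ => Real.exp_pos _) Finset.univ_nonempty
  -- the normalization: ∫⁻ ofReal (c w) d(Q ⊗ Mn) ≤ 1
  have hone : ∫⁻ w, ENNReal.ofReal (c w) ∂(Q.prod Mn) ≤ 1 := by
    set t := ∫⁻ w, ENNReal.ofReal (c w) ∂(Q.prod Mn) with ht
    have hterm_meas : ∀ j' : Fin (n + 1),
        Measurable fun y : Fin (n + 1) → 𝒴 =>
          ENNReal.ofReal (Kr * Real.exp (h (y j')) / ∑ i, Real.exp (h (y i))) := by
      intro j'
      apply Measurable.ennreal_ofReal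
      apply Measurable.div
      · exact measurable_const.mul (Real.measurable_exp.comp (hh.comp (measurable_pi_apply j')))
      · exact Finset.measurable_sum _ fun i _ =>
          Real.measurable_exp.comp (hh.comp (measurable_pi_apply i))
    have hallj : ∀ j' : Fin (n + 1),
        ∫⁻ y, ENNReal.ofReal (Kr * Real.exp (h (y j')) / ∑ i, Real.exp (h (y i)))
          ∂(Measure.pi fun _ : Fin (n + 1) => Q) = t := by
      intro j'
      rw [ht, ← aux_lint_pi_eq Q n j' _ hc_meas.ennreal_ofReal]
      congr 1
      funext y
      congr 1
      rw [hc_def]; simp only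
      rw [Fin.sum_univ_succAbove (fun i => Real.exp (h (y i))) j']
    have hsum : ((n + 1 : ℕ) : ENNReal) * t = ENNReal.ofReal Kr := by
      calc ((n + 1 : ℕ) : ENNReal) * t
          = ∑ j' : Fin (n + 1), ∫⁻ y,
              ENNReal.ofReal (Kr * Real.exp (h (y j')) / ∑ i, Real.exp (h (y i)))
              ∂(Measure.pi fun _ : Fin (n + 1) => Q) := by
            simp only [hallj, Finset.sum_const, Finset.card_univ, Fintype.card_fin,
              nsmul_eq_mul]
        _ = ∫⁻ y, ∑ j' : Fin (n + 1),
              ENNReal.ofReal (Kr * Real.exp (h (y j')) / ∑ i, Real.exp (h (y i)))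
              ∂(Measure.pi fun _ : Fin (n + 1) => Q) := by
            rw [lintegral_finset_sum _ fun j' _ => hterm_meas j']
        _ = ∫⁻ _, ENNReal.ofReal Kr ∂(Measure.pi fun _ : Fin (n + 1) => Q) := by
            congr 1
            funext y
            rw [← ENNReal.ofReal_sum_of_nonneg]
            · congr 1
              rw [← Finset.sum_div, ← Finset.mul_sum,
                mul_div_assoc, div_self (hS_pos y).ne', mul_one]
            · intro i _
              positivity
        _ = ENNReal.ofReal Kr := by simp
    have hsum' : ((n + 1 : ℕ) : ENNReal) * t = ((n + 1 : ℕ) : ENNReal) * 1 := by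
      rw [hsum, mul_one, hKr]
      rw [ENNReal.ofReal_natCast]
    rw [← ENNReal.mul_le_mul_iff_right (a := ((n + 1 : ℕ) : ENNReal)) (by positivity)
      (ENNReal.natCast_ne_top _), hsum']
  -- apply the core lemma
  have hcore := aux_core P Q hPQ hint Mn c hc_meas hc_pos hc_le hone
  -- transfer back to the pi space
  have hφmeas : Measurable fun w : 𝒴 × (Fin n → 𝒴) =>
      ENNReal.ofReal (Real.log Kr - Real.log (c w)) :=
    (measurable_const.sub (Real.measurable_log.comp hc_meas)).ennreal_ofReal
  rw [← aux_lint_cond_eq P Q n j _ hφmeas] at hcore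
  refine le_trans hcore (le_of_eq ?_)
  congr 1
  funext y
  congr 1
  rw [hc_def]; simp only
  rw [Fin.sum_univ_succAbove (fun i => Real.exp (h (y i))) j]
  set a := Real.exp (h (y j)) with ha
  set s := a + ∑ i : Fin n, Real.exp (h (y (j.succAbove i))) with hs
  have hapos : 0 < a := Real.exp_pos _
  have hspos : 0 < s := by
    have : (0 : ℝ) ≤ ∑ i : Fin n, Real.exp (h (y (j.succAbove i))) :=
      Finset.sum_nonneg fun i _ => (Real.exp_pos _).le
    linarith
  rw [Real.log_div (by positivity) hspos.ne', Real.log_mul hKrpos.ne' hapos.ne',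
    Real.log_div hapos.ne' hspos.ne']
  ring

end MainAux

set_option maxHeartbeats 1000000 in
/-- **InfoNCE upper bound by information drift.**  In the 1-positive
`(K−1)`-negative sampling scheme, for every measurable score `h : 𝒴 → ℝ` define the
`K`-sample InfoNCE loss `𝓛_{NCE,K}(h) := −E[log (e^{h(Y_J)} / ∑ i, e^{h(Y_i)})]`
(the integrand `−log(softmax)` is nonnegative).  Then for every `K ≥ 2`,
`−𝓛_{NCE,K}(h) ≤ KL(P‖Q) − log K`. -/
theorem stmt_15 {𝒴 : Type*} [MeasurableSpace 𝒴]
    (P Q : Measure 𝒴) [IsProbabilityMeasure P] [IsProbabilityMeasure Q]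
    (hPQ : P ≪ Q) (K : ℕ) (hK : 2 ≤ K)
    (h : 𝒴 → ℝ) (hh : Measurable h)
    (LNCE : ENNReal)
    (hLNCE : LNCE = ∫⁻ z, ENNReal.ofReal
        (-Real.log (Real.exp (h (z.2 z.1)) / ∑ i, Real.exp (h (z.2 i))))
        ∂(jointLaw P Q K)) :
    -(LNCE : EReal) ≤ klDiv P Q - ((Real.log K : ℝ) : EReal) := by
  by_cases hcase : P ≪ Q ∧ Integrable (llr P Q) P
  swap
  · rw [klDiv, if_neg hcase, EReal.top_sub_coe]
    exact le_top
  obtain ⟨-, hint⟩ := hcase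
  rw [klDiv, if_pos ⟨hPQ, hint⟩]
  obtain ⟨n, rfl⟩ : ∃ n, K = n + 1 := ⟨K - 1, by omega⟩
  set KL : ℝ := ∫ x, llr P Q x ∂P with hKL
  -- measurability of the global integrand
  have hf : Measurable fun z : Fin (n + 1) × (Fin (n + 1) → 𝒴) =>
      ENNReal.ofReal (-Real.log (Real.exp (h (z.2 z.1)) / ∑ i, Real.exp (h (z.2 i)))) := by
    have h1 : Measurable fun q : (Fin (n + 1) → 𝒴) × Fin (n + 1) =>
        ENNReal.ofReal (-Real.log (Real.exp (h (q.1 q.2)) / ∑ i, Real.exp (h (q.1 i)))) := by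
      apply measurable_from_prod_countable_left
      intro j
      apply Measurable.ennreal_ofReal
      apply Measurable.neg
      apply Real.measurable_log.comp
      apply Measurable.div
      · exact Real.measurable_exp.comp (hh.comp (measurable_pi_apply j))
      · exact Finset.measurable_sum _ fun i _ =>
          Real.measurable_exp.comp (hh.comp (measurable_pi_apply i))
    have h2 := h1.comp (measurable_swap :
      Measurable (Prod.swap : Fin (n+1) × (Fin (n+1) → 𝒴) → (Fin (n+1) → 𝒴) × Fin (n+1)))
    exact h2
  -- decompose LNCE
  have hdecomp : LNCE = ((n + 1 : ℕ) : ENNReal)⁻¹ * ∑ j : Fin (n + 1),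
      ∫⁻ y, ENNReal.ofReal
        (-Real.log (Real.exp (h (y j)) / ∑ i, Real.exp (h (y i)))) ∂(condLaw P Q j) := by
    rw [hLNCE, jointLaw, lintegral_smul_measure, lintegral_finset_sum_measure]
    congr 1
    refine Finset.sum_congr rfl fun j _ => ?_
    rw [lintegral_map hf measurable_prodMk_left]
  -- per-index bound
  set b : ENNReal := ENNReal.ofReal (Real.log ((n + 1 : ℕ) : ℝ) - KL) with hb
  have hkey : b ≤ LNCE := by
    rw [hdecomp]
    have hsum_ge : ((n + 1 : ℕ) : ENNReal) * b ≤ ∑ j : Fin (n + 1),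
        ∫⁻ y, ENNReal.ofReal
          (-Real.log (Real.exp (h (y j)) / ∑ i, Real.exp (h (y i)))) ∂(condLaw P Q j) := by
      calc ((n + 1 : ℕ) : ENNReal) * b = ∑ _j : Fin (n + 1), b := by
            simp [Finset.sum_const, nsmul_eq_mul]
        _ ≤ _ := Finset.sum_le_sum fun j _ => aux_perj P Q hPQ hint n h hh j
    calc b = ((n + 1 : ℕ) : ENNReal)⁻¹ * (((n + 1 : ℕ) : ENNReal) * b) := by
          rw [← mul_assoc, ENNReal.inv_mul_cancel (by positivity) (ENNReal.natCast_ne_top _),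
            one_mul]
      _ ≤ _ := mul_le_mul_right hsum_ge _
  -- conclude in EReal
  rcases eq_or_ne LNCE ⊤ with htop | hne
  · rw [htop, EReal.coe_ennreal_top, EReal.neg_top]
    exact bot_le
  have hco : ((LNCE.toReal : ℝ) : EReal) = (LNCE : EReal) := by
    calc ((LNCE.toReal : ℝ) : EReal) = max (LNCE.toReal : EReal) 0 := by
          rw [max_eq_left]
          exact_mod_cast ENNReal.toReal_nonneg
      _ = ((ENNReal.ofReal LNCE.toReal : ENNReal) : EReal) := (EReal.coe_ennreal_ofReal).symm
      _ = (LNCE : EReal) := by rw [ENNReal.ofReal_toReal hne]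
  rw [← hco, ← EReal.coe_neg, ← EReal.coe_sub, EReal.coe_le_coe_iff]
  have h1 : Real.log ((n + 1 : ℕ) : ℝ) - KL ≤ LNCE.toReal := by
    have h2 := ENNReal.toReal_mono hne hkey
    rcases le_or_gt (Real.log ((n + 1 : ℕ) : ℝ) - KL) 0 with hle | hlt
    · exact le_trans hle ENNReal.toReal_nonneg
    · rwa [hb, ENNReal.toReal_ofReal hlt.le] at h2
  linarith
end

section
/- (Wald's error inequality for the SPRT.) Let (Ω, 𝓕, (𝓕_n)_{n≥1}) be a filtered measurable space carrying two probability measures ℙ_0 and ℙ_1 such that for every n the restriction of ℙ_1 to 𝓕_n is absolutely continuous with respect to the restriction of ℙ_0 to 𝓕_n, with log-likelihood ratio S_n := log( d(ℙ_1|_{𝓕_n}) / d(ℙ_0|_{𝓕_n}) ). Fix α, β ∈ (0,1) with α + β < 1, set A := (1−β)/α and B := β/(1−α), and define the stopping time N := inf{ n : S_n ≥ log A or S_n ≤ log B }. Assume N < ∞ almost surely under both ℙ_0 and ℙ_1, and let the terminal decision accept H_1 if S_N ≥ log A and accept H_0 if S_N ≤ log B. Then ℙ_0(accept H_1) + ℙ_1(accept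 H_0) ≤ α + β. -/
open MeasureTheory

/-- **Wald's error inequality for the SPRT.**  Let `(Ω, 𝓕, (𝓕ₙ))` be a
filtered measurable space with probability measures `ℙ₀, ℙ₁` such that for every `n` the
restriction of `ℙ₁` to `𝓕ₙ` is absolutely continuous with respect to that of `ℙ₀`, and
let `Sₙ := log (d(ℙ₁|𝓕ₙ) / d(ℙ₀|𝓕ₙ))` be the accumulated log-likelihood ratio.  Fix
`α, β ∈ (0,1)` with `α + β < 1`, set `A := (1−β)/α`, `B := β/(1−α)`, and let
`N := inf {n ≥ 1 : Sₙ ≥ log A or Sₙ ≤ log B}`, assumed a.s. finite under both measures.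
Deciding `H₁` when `S_N ≥ log A` and `H₀` when `S_N ≤ log B`, the error probabilities
satisfy `ℙ₀(accept H₁) + ℙ₁(accept H₀) ≤ α + β`. -/
theorem stmt_16 {Ω : Type*} [m0 : MeasurableSpace Ω]
    (ℱ : Filtration ℕ m0)
    (P0 P1 : Measure Ω) [IsProbabilityMeasure P0] [IsProbabilityMeasure P1]
    (habs : ∀ n : ℕ, P1.trim (ℱ.le n) ≪ P0.trim (ℱ.le n))
    (S : ℕ → Ω → ℝ)
    (hS : S = fun n ω =>
      Real.log (((P1.trim (ℱ.le n)).rnDeriv (P0.trim (ℱ.le n))) ω).toReal)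
    (α β : ℝ) (hα : α ∈ Set.Ioo (0 : ℝ) 1) (hβ : β ∈ Set.Ioo (0 : ℝ) 1)
    (hαβ : α + β < 1)
    (A B : ℝ) (hA : A = (1 - β) / α) (hB : B = β / (1 - α))
    (N : Ω → ℕ)
    (hN : N = fun ω =>
      sInf {n : ℕ | 1 ≤ n ∧ (Real.log A ≤ S n ω ∨ S n ω ≤ Real.log B)})
    (hfin0 : ∀ᵐ ω ∂P0,
      ∃ n : ℕ, 1 ≤ n ∧ (Real.log A ≤ S n ω ∨ S n ω ≤ Real.log B))
    (hfin1 : ∀ᵐ ω ∂P1,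
      ∃ n : ℕ, 1 ≤ n ∧ (Real.log A ≤ S n ω ∨ S n ω ≤ Real.log B)) :
    P0 {ω | Real.log A ≤ S (N ω) ω} + P1 {ω | S (N ω) ω ≤ Real.log B}
      ≤ ENNReal.ofReal (α + β) := by
  obtain ⟨hα0, hα1⟩ := hα
  obtain ⟨hβ0, hβ1⟩ := hβ
  have hA1 : 1 < A := by rw [hA]; rw [lt_div_iff₀ hα0]; linarith
  have hB0 : 0 < B := by rw [hB]; exact div_pos hβ0 (by linarith)
  have hB1 : B < 1 := by rw [hB]; rw [div_lt_one (by linarith)]; linarith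
  -- measurability of S n w.r.t. ℱ n
  have hSmeas : ∀ n, Measurable[ℱ n] (S n) := by
    intro n
    rw [hS]
    exact Real.measurable_log.comp
      (ENNReal.measurable_toReal.comp (Measure.measurable_rnDeriv _ _))
  -- the stopping sets
  set T : ℕ → Set Ω := fun k =>
    {ω | 1 ≤ k ∧ (Real.log A ≤ S k ω ∨ S k ω ≤ Real.log B)} with hT
  have hTmeas : ∀ k, MeasurableSet[ℱ k] (T k) := by
    intro k
    have : T k = {ω | 1 ≤ k} ∩ ({ω | Real.log A ≤ S k ω} ∪ {ω | S k ω ≤ Real.log B}) := by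
      rfl
    rw [this]
    exact (MeasurableSet.const _).inter
      ((measurableSet_le measurable_const (hSmeas k)).union
        (measurableSet_le (hSmeas k) measurable_const))
  have hNk : ∀ ω, N ω = sInf {k | ω ∈ T k} := by
    intro ω; rw [hN]; rfl
  -- characterization of {N = n}
  have hNzero : ∀ ω, N ω = 0 ↔ ∀ k, ω ∉ T k := by
    intro ω
    rw [hNk]
    constructor
    · intro h k hk
      have hne : {k | ω ∈ T k}.Nonempty := ⟨k, hk⟩
      have := Nat.sInf_mem hne
      have h1 : 1 ≤ sInf {k | ω ∈ T k} := this.1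
      omega
    · intro h
      have : {k | ω ∈ T k} = ∅ := Set.eq_empty_iff_forall_notMem.mpr h
      simp [this]
  have hNpos : ∀ n, 1 ≤ n → ∀ ω, (N ω = n ↔ ω ∈ T n ∧ ∀ k < n, ω ∉ T k) := by
    intro n hn ω
    rw [hNk]
    constructor
    · intro h
      have hne : {k | ω ∈ T k}.Nonempty := by
        by_contra hc
        rw [Set.not_nonempty_iff_eq_empty] at hc
        rw [hc] at h; simp at h; omega
      have hmem := Nat.sInf_mem hne
      rw [h] at hmem
      refine ⟨hmem, fun k hk hkT => ?_⟩
      have := Nat.sInf_le (show k ∈ {j | ω ∈ T j} from hkT)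
      omega
    · rintro ⟨h1, h2⟩
      have hle : sInf {k | ω ∈ T k} ≤ n := Nat.sInf_le h1
      have hge : n ≤ sInf {k | ω ∈ T k} := by
        have hmem := Nat.sInf_mem (⟨n, h1⟩ : {k | ω ∈ T k}.Nonempty)
        by_contra hc
        push_neg at hc
        exact h2 _ hc hmem
      omega
  -- {N = n} is ℱ n-measurable for n ≥ 1
  have hNsetmeas : ∀ n, 1 ≤ n → MeasurableSet[ℱ n] {ω | N ω = n} := by
    intro n hn
    have : {ω | N ω = n} = T n ∩ ⋂ k, ⋂ (_ : k < n), (T k)ᶜ := by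
      ext ω
      simp only [Set.mem_setOf_eq, Set.mem_inter_iff, Set.mem_iInter,
        Set.mem_compl_iff]
      rw [hNpos n hn ω]
    rw [this]
    refine (hTmeas n).inter (MeasurableSet.iInter fun k => MeasurableSet.iInter fun hk => ?_)
    exact ((ℱ.mono hk.le) (T k) (hTmeas k)).compl
  -- the events E n = accept-H1 at time n, F n = accept-H0 at time n
  set E : ℕ → Set Ω := fun n => {ω | Real.log A ≤ S n ω} ∩ {ω | N ω = n} with hE
  set F : ℕ → Set Ω := fun n => {ω | S n ω ≤ Real.log B} ∩ {ω | N ω = n} with hF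
  have hEmeas : ∀ n, 1 ≤ n → MeasurableSet[ℱ n] (E n) :=
    fun n hn => (measurableSet_le measurable_const (hSmeas n)).inter (hNsetmeas n hn)
  have hFmeas : ∀ n, 1 ≤ n → MeasurableSet[ℱ n] (F n) :=
    fun n hn => (measurableSet_le (hSmeas n) measurable_const).inter (hNsetmeas n hn)
  -- D1 D0 decompositions
  have hD1 : {ω | Real.log A ≤ S (N ω) ω} = ⋃ n, E n := by
    ext ω
    simp only [Set.mem_setOf_eq, Set.mem_iUnion, hE, Set.mem_inter_iff]
    constructor
    · intro h; exact ⟨N ω, h, rfl⟩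
    · rintro ⟨n, h, rfl⟩; exact h
  have hD0 : {ω | S (N ω) ω ≤ Real.log B} = ⋃ n, F n := by
    ext ω
    simp only [Set.mem_setOf_eq, Set.mem_iUnion, hF, Set.mem_inter_iff]
    constructor
    · intro h; exact ⟨N ω, h, rfl⟩
    · rintro ⟨n, h, rfl⟩; exact h
  -- measure of N=0
  have hN0set : {ω | N ω = 0} = ⋂ k, (T k)ᶜ := by
    ext ω; simp only [Set.mem_setOf_eq, Set.mem_iInter, Set.mem_compl_iff]
    exact hNzero ω
  have hN0meas : MeasurableSet {ω | N ω = 0} := by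
    rw [hN0set]
    exact MeasurableSet.iInter fun k => (ℱ.le k _ (hTmeas k)).compl
  have hNull : ∀ (μ : Measure Ω), (∀ᵐ ω ∂μ,
      ∃ n : ℕ, 1 ≤ n ∧ (Real.log A ≤ S n ω ∨ S n ω ≤ Real.log B)) →
      μ {ω | N ω = 0} = 0 := by
    intro μ hfin
    rw [ae_iff] at hfin
    refine measure_mono_null (fun ω hω => ?_) hfin
    simp only [Set.mem_setOf_eq] at hω ⊢
    rw [hNzero] at hω
    rintro ⟨n, hn⟩
    exact hω n hn
  have hP0N0 : P0 {ω | N ω = 0} = 0 := hNull P0 hfin0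
  have hP1N0 : P1 {ω | N ω = 0} = 0 := hNull P1 hfin1
  -- key pointwise bounds on the RN derivative
  have hkey_up : ∀ n, 1 ≤ n →
      ENNReal.ofReal A * P0 (E n) ≤ P1 (E n) := by
    intro n hn
    have hC := hEmeas n hn
    have h1 : P1 (E n) = (P1.trim (ℱ.le n)) (E n) :=
      (trim_measurableSet_eq (ℱ.le n) hC).symm
    have h0 : P0 (E n) = (P0.trim (ℱ.le n)) (E n) :=
      (trim_measurableSet_eq (ℱ.le n) hC).symm
    rw [h1, h0, ← Measure.setLIntegral_rnDeriv' (habs n) hC]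
    calc ENNReal.ofReal A * (P0.trim (ℱ.le n)) (E n)
        = ∫⁻ _ in E n, ENNReal.ofReal A ∂(P0.trim (ℱ.le n)) := by
          rw [setLIntegral_const]
      _ ≤ ∫⁻ ω in E n, (P1.trim (ℱ.le n)).rnDeriv (P0.trim (ℱ.le n)) ω
            ∂(P0.trim (ℱ.le n)) := by
          refine setLIntegral_mono_ae (Measure.measurable_rnDeriv _ _).aemeasurable ?_
          refine ae_of_all _ fun ω hω => ?_
          obtain ⟨hω1, -⟩ := hω
          simp only [Set.mem_setOf_eq] at hω1
      -- hω1 : Real.log A ≤ S n ω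
          set r := (P1.trim (ℱ.le n)).rnDeriv (P0.trim (ℱ.le n)) ω with hr
          rcases eq_or_ne r ⊤ with h | h
          · rw [h]; exact le_top
          · have hSval : S n ω = Real.log r.toReal := by rw [hS]
            rw [hSval] at hω1
            have hlogA : 0 < Real.log A := Real.log_pos hA1
            have hrt : 0 < r.toReal := by
              rcases (ENNReal.toReal_nonneg (a := r)).lt_or_eq with h' | h'
              · exact h'
              · exfalso
                rw [← h', Real.log_zero] at hω1
                linarith
            have hAr : A ≤ r.toReal := by
              have := Real.exp_le_exp.mpr hω1
              rwa [Real.exp_log (by linarith), Real.exp_log hrt] at this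
            calc ENNReal.ofReal A ≤ ENNReal.ofReal r.toReal :=
                  ENNReal.ofReal_le_ofReal hAr
              _ = r := ENNReal.ofReal_toReal h
  -- downward bound
  have hkey_down : ∀ n, 1 ≤ n →
      P1 (F n) ≤ ENNReal.ofReal B * P0 (F n) := by
    intro n hn
    have hC := hFmeas n hn
    have h1 : P1 (F n) = (P1.trim (ℱ.le n)) (F n) :=
      (trim_measurableSet_eq (ℱ.le n) hC).symm
    have h0 : P0 (F n) = (P0.trim (ℱ.le n)) (F n) :=
      (trim_measurableSet_eq (ℱ.le n) hC).symm
    rw [h1, h0, ← Measure.setLIntegral_rnDeriv' (habs n) hC]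
    calc ∫⁻ ω in F n, (P1.trim (ℱ.le n)).rnDeriv (P0.trim (ℱ.le n)) ω
            ∂(P0.trim (ℱ.le n))
        ≤ ∫⁻ _ in F n, ENNReal.ofReal B ∂(P0.trim (ℱ.le n)) := by
          refine setLIntegral_mono_ae measurable_const.aemeasurable ?_
          refine ae_of_all _ fun ω hω => ?_
          obtain ⟨hω1, -⟩ := hω
          simp only [Set.mem_setOf_eq] at hω1
          set r := (P1.trim (ℱ.le n)).rnDeriv (P0.trim (ℱ.le n)) ω with hr
          have hSval : S n ω = Real.log r.toReal := by rw [hS]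
          rw [hSval] at hω1
          have hlogB : Real.log B < 0 := Real.log_neg hB0 hB1
          have hne : r ≠ ⊤ := by
            intro hc
            rw [hc] at hω1
            simp only [ENNReal.toReal_top, Real.log_zero] at hω1
            linarith
          rcases (ENNReal.toReal_nonneg (a := r)).lt_or_eq with h' | h'
          · have hrB : r.toReal ≤ B := by
              have := Real.exp_le_exp.mpr hω1
              rwa [Real.exp_log h', Real.exp_log hB0] at this
            calc r = ENNReal.ofReal r.toReal := (ENNReal.ofReal_toReal hne).symm
              _ ≤ ENNReal.ofReal B := ENNReal.ofReal_le_ofReal hrB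
          · have : r = 0 := by
              rw [← ENNReal.ofReal_toReal hne, ← h']
              simp
            rw [this]
            exact zero_le
      _ = ENNReal.ofReal B * (P0.trim (ℱ.le n)) (F n) := setLIntegral_const _ _
  -- m0-measurability of the pieces
  have hEm0 : ∀ n, MeasurableSet (E n) := by
    intro n
    rcases Nat.eq_zero_or_pos n with h | h
    · subst h
      exact ((ℱ.le 0) _ (measurableSet_le measurable_const (hSmeas 0))).inter hN0meas
    · exact ℱ.le n _ (hEmeas n h)
  have hFm0 : ∀ n, MeasurableSet (F n) := by
    intro n
    rcases Nat.eq_zero_or_pos n with h | h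
    · subst h
      exact ((ℱ.le 0) _ (measurableSet_le (hSmeas 0) measurable_const)).inter hN0meas
    · exact ℱ.le n _ (hFmeas n h)
  have hdisjE : Pairwise (Function.onFun Disjoint E) := by
    intro m n hmn
    refine Set.disjoint_left.mpr fun ω hm hn => ?_
    exact hmn (hm.2.symm.trans hn.2)
  have hdisjF : Pairwise (Function.onFun Disjoint F) := by
    intro m n hmn
    refine Set.disjoint_left.mpr fun ω hm hn => ?_
    exact hmn (hm.2.symm.trans hn.2)
  -- decomposed measures
  have hP0D1 : P0 {ω | Real.log A ≤ S (N ω) ω} = ∑' n, P0 (E n) := by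
    rw [hD1]; exact measure_iUnion hdisjE hEm0
  have hP1D1 : P1 {ω | Real.log A ≤ S (N ω) ω} = ∑' n, P1 (E n) := by
    rw [hD1]; exact measure_iUnion hdisjE hEm0
  have hP0D0 : P0 {ω | S (N ω) ω ≤ Real.log B} = ∑' n, P0 (F n) := by
    rw [hD0]; exact measure_iUnion hdisjF hFm0
  have hP1D0 : P1 {ω | S (N ω) ω ≤ Real.log B} = ∑' n, P1 (F n) := by
    rw [hD0]; exact measure_iUnion hdisjF hFm0
  -- global bounds
  have hup : ENNReal.ofReal A * P0 {ω | Real.log A ≤ S (N ω) ω}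
      ≤ P1 {ω | Real.log A ≤ S (N ω) ω} := by
    rw [hP0D1, hP1D1, ← ENNReal.tsum_mul_left]
    refine ENNReal.tsum_le_tsum fun n => ?_
    rcases Nat.eq_zero_or_pos n with h | h
    · subst h
      have : P0 (E 0) = 0 :=
        measure_mono_null (fun ω hω => hω.2) hP0N0
      rw [this, mul_zero]
      exact zero_le
    · exact hkey_up n h
  have hdown : P1 {ω | S (N ω) ω ≤ Real.log B}
      ≤ ENNReal.ofReal B * P0 {ω | S (N ω) ω ≤ Real.log B} := by
    rw [hP0D0, hP1D0, ← ENNReal.tsum_mul_left]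
    refine ENNReal.tsum_le_tsum fun n => ?_
    rcases Nat.eq_zero_or_pos n with h | h
    · subst h
      have : P1 (F 0) = 0 :=
        measure_mono_null (fun ω hω => hω.2) hP1N0
      rw [this]
      exact zero_le
    · exact hkey_down n h
  -- D1 and D0 are disjoint, measurable
  have hD1meas : MeasurableSet {ω | Real.log A ≤ S (N ω) ω} := by
    rw [hD1]; exact MeasurableSet.iUnion hEm0
  have hD0meas : MeasurableSet {ω | S (N ω) ω ≤ Real.log B} := by
    rw [hD0]; exact MeasurableSet.iUnion hFm0
  have hdisjD : Disjoint {ω | Real.log A ≤ S (N ω) ω} {ω | S (N ω) ω ≤ Real.log B} := by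
    refine Set.disjoint_left.mpr fun ω h1 h0 => ?_
    simp only [Set.mem_setOf_eq] at h1 h0
    have := Real.log_pos hA1
    have := Real.log_neg hB0 hB1
    linarith
  -- pass to real numbers
  set a := (P0 {ω | Real.log A ≤ S (N ω) ω}).toReal with ha
  set b := (P1 {ω | S (N ω) ω ≤ Real.log B}).toReal with hb
  set c := (P1 {ω | Real.log A ≤ S (N ω) ω}).toReal with hc
  set d := (P0 {ω | S (N ω) ω ≤ Real.log B}).toReal with hd
  have hne0 : ∀ (μ : Measure Ω) [IsProbabilityMeasure μ] (s : Set Ω), μ s ≠ ⊤ :=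
    fun μ _ s => measure_ne_top μ s
  have h1 : A * a ≤ c := by
    have := ENNReal.toReal_mono (hne0 P1 _) hup
    rwa [ENNReal.toReal_mul, ENNReal.toReal_ofReal (by linarith : (0:ℝ) ≤ A)] at this
  have h2 : b ≤ B * d := by
    have := ENNReal.toReal_mono (by
      exact ENNReal.mul_ne_top ENNReal.ofReal_ne_top (hne0 P0 _)) hdown
    rwa [ENNReal.toReal_mul, ENNReal.toReal_ofReal (by linarith : (0:ℝ) ≤ B)] at this
  have h3 : c + b ≤ 1 := by
    have hu : P1 {ω | Real.log A ≤ S (N ω) ω} + P1 {ω | S (N ω) ω ≤ Real.log B} ≤ 1 := by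
      rw [← measure_union hdisjD hD0meas]
      exact prob_le_one
    have := ENNReal.toReal_mono (by norm_num) hu
    rwa [ENNReal.toReal_add (hne0 P1 _) (hne0 P1 _), ENNReal.toReal_one] at this
  have h4 : a + d ≤ 1 := by
    have hu : P0 {ω | Real.log A ≤ S (N ω) ω} + P0 {ω | S (N ω) ω ≤ Real.log B} ≤ 1 := by
      rw [← measure_union hdisjD hD0meas]
      exact prob_le_one
    have := ENNReal.toReal_mono (by norm_num) hu
    rwa [ENNReal.toReal_add (hne0 P0 _) (hne0 P0 _), ENNReal.toReal_one] at this
  have hαA : α * A = 1 - β := by rw [hA]; field_simp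
  have hβB : (1 - α) * B = β := by
    rw [hB, mul_comm, div_mul_cancel₀ _ (show (1:ℝ) - α ≠ 0 by linarith)]
  have hcnn : 0 ≤ c := ENNReal.toReal_nonneg
  have hdnn : 0 ≤ d := ENNReal.toReal_nonneg
  have hann : 0 ≤ a := ENNReal.toReal_nonneg
  have hbnn : 0 ≤ b := ENNReal.toReal_nonneg
  have e1 : α * (A * a) ≤ α * c := mul_le_mul_of_nonneg_left h1 hα0.le
  have e2 : (1 - α) * b ≤ (1 - α) * (B * d) :=
    mul_le_mul_of_nonneg_left h2 (by linarith)
  have e3 : α * c ≤ α * (1 - b) := mul_le_mul_of_nonneg_left (by linarith) hα0.le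
  have e4 : β * d ≤ β * (1 - a) := mul_le_mul_of_nonneg_left (by linarith) hβ0.le
  have f1 : (1 - β) * a ≤ α * c := by rw [← hαA]; nlinarith [e1]
  have f2 : (1 - α) * b ≤ β * d := by
    have : (1 - α) * (B * d) = β * d := by rw [← hβB]; ring
    linarith [e2]
  have hab : a + b ≤ α + β := by nlinarith [f1, f2, e3, e4]
  -- conclude
  calc P0 {ω | Real.log A ≤ S (N ω) ω} + P1 {ω | S (N ω) ω ≤ Real.log B}
      = ENNReal.ofReal a + ENNReal.ofReal b := by
        rw [ha, hb, ENNReal.ofReal_toReal (hne0 P0 _), ENNReal.ofReal_toReal (hne0 P1 _)]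
    _ = ENNReal.ofReal (a + b) := (ENNReal.ofReal_add hann hbnn).symm
    _ ≤ ENNReal.ofReal (α + β) := ENNReal.ofReal_le_ofReal hab
end
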